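/- arXiv:2103.02138 — 2 statements merged into one kernel-verified Lean document; each statement's English description precedes it below -/
import Mathlib

section
/- Let λ, λ̃ > 0 and δ ≥ 0 be real numbers, and let n ≥ 1 be a natural number such that |1/λ − 1/λ̃| ≤ δ and n·δ·λ ≤ 1/20. Then λ̃^n ≤ (1 + 2·n·δ·λ) · λ^n. -/
theorem stmt_7 (lam tlam δ : ℝ) (n : ℕ)
    (hlam : 0 < lam) (htlam : 0 < tlam) (hδ : 0 ≤ δ) (hn : 1 ≤ n)
    (hclose : |1 / lam - 1 / tlam| ≤ δ)
    (hsmall : (n : ℝ) * δ * lam ≤ 1 / 20) :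
    tlam ^ n ≤ (1 + 2 * (n : ℝ) * δ * lam) * lam ^ n := by
  set x : ℝ := (n : ℝ) * δ * lam with hxdef
  have hn1 : (1 : ℝ) ≤ (n : ℝ) := by exact_mod_cast hn
  have hdl : δ * lam ≤ x := by
    have := mul_le_mul_of_nonneg_right hn1 (mul_nonneg hδ hlam.le)
    nlinarith
  have hx0 : 0 ≤ x := by positivity
  have hdl0 : 0 ≤ δ * lam := mul_nonneg hδ hlam.le
  have h1mpos : 0 < 1 - δ * lam := by linarith
  have h2 : 1 / lam - δ ≤ 1 / tlam := by
    have := (abs_le.mp hclose).2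
    linarith
  have h3 : (1 - δ * lam) / lam ≤ 1 / tlam := by
    rw [sub_div, mul_div_assoc, div_self hlam.ne']
    simpa [one_div] using h2
  have htl : tlam ≤ lam / (1 - δ * lam) := by
    rw [le_div_iff₀ h1mpos]
    rw [div_le_div_iff₀ hlam htlam] at h3
    nlinarith
  have hpow : tlam ^ n ≤ (lam / (1 - δ * lam)) ^ n :=
    pow_le_pow_left₀ htlam.le htl n
  have hbern : 1 - x ≤ (1 - δ * lam) ^ n := by
    have := one_add_mul_le_pow (a := -(δ * lam)) (by linarith) n
    have h' : 1 - (n : ℝ) * (δ * lam) ≤ (1 - δ * lam) ^ n := by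
      simpa [sub_eq_add_neg, mul_comm] using this
    calc 1 - x = 1 - (n : ℝ) * (δ * lam) := by rw [hxdef]; ring
      _ ≤ _ := h'
  have hpowpos : 0 < (1 - δ * lam) ^ n := pow_pos h1mpos n
  calc tlam ^ n ≤ (lam / (1 - δ * lam)) ^ n := hpow
    _ = lam ^ n / (1 - δ * lam) ^ n := div_pow lam _ n
    _ ≤ (1 + 2 * x) * lam ^ n := by
        rw [div_le_iff₀ hpowpos]
        have h5 : (1 + 2 * x) * (1 - x) ≤ (1 + 2 * x) * (1 - δ * lam) ^ n :=
          mul_le_mul_of_nonneg_left hbern (by linarith)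
        have hone : 1 ≤ (1 + 2 * x) * (1 - δ * lam) ^ n := by nlinarith
        nlinarith [mul_le_mul_of_nonneg_right hone (pow_pos hlam n).le]
    _ = (1 + 2 * (n : ℝ) * δ * lam) * lam ^ n := by rw [hxdef]; ring
end

section
/- Fix a natural number d ≥ 1 and real numbers m > 0, ζ > 0, ε_A ≥ 0, ε_c ≥ 0 with δ := max(ε_A/m, ε_c/ζ). Let A, Ã : ℝ^d → Matrix(d, d, ℝ) be continuous matrix-valued functions and c, c̃ : ℝ^d → ℝ continuous functions such that for all x ∈ ℝ^d and ξ ∈ ℝ^d: m‖ξ‖² ≤ ⟨A(x)ξ, ξ⟩, c(x) ≥ ζ, |⟨(Ã(x) − A(x))ξ, ξ⟩| ≤ ε_A‖ξ‖², and |c̃(x) − c(x)| ≤ ε_c. Then for every C^∞ compactly supported u : ℝ^d → ℝ, ∫_{ℝ^d} (⟨(Ã(x) − A(x))∇u(x), ∇u(x)⟩ + (c̃(x) − c(x)) u(x)²) dx ≤ δ · ∫_{ℝ^d} (⟨A(x)∇u(x), ∇u(x)⟩ + c(x) u(x)²) dx. -/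
open MeasureTheory

theorem stmt_14 {d : ℕ} (hd : 1 ≤ d) (m ζ εA εc δ : ℝ)
    (hm : 0 < m) (hζ : 0 < ζ) (hεA : 0 ≤ εA) (hεc : 0 ≤ εc)
    (hδ : δ = max (εA / m) (εc / ζ))
    (A Atil : EuclideanSpace ℝ (Fin d) → Matrix (Fin d) (Fin d) ℝ)
    (hA : ∀ i j : Fin d, Continuous fun x => A x i j)
    (hAtil : ∀ i j : Fin d, Continuous fun x => Atil x i j)
    (c ctil : EuclideanSpace ℝ (Fin d) → ℝ)
    (hc : Continuous c) (hctil : Continuous ctil)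
    (hell : ∀ (x : EuclideanSpace ℝ (Fin d)) (ξ : EuclideanSpace ℝ (Fin d)),
      m * ‖ξ‖ ^ 2 ≤ ∑ i : Fin d, (A x).mulVec (fun j => ξ j) i * ξ i)
    (hcζ : ∀ x, ζ ≤ c x)
    (hApert : ∀ (x : EuclideanSpace ℝ (Fin d)) (ξ : EuclideanSpace ℝ (Fin d)),
      |∑ i : Fin d, (Atil x - A x).mulVec (fun j => ξ j) i * ξ i| ≤ εA * ‖ξ‖ ^ 2)
    (hcpert : ∀ x, |ctil x - c x| ≤ εc)
    (u : EuclideanSpace ℝ (Fin d) → ℝ)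
    (hu : ContDiff ℝ (⊤ : ℕ∞) u) (hu' : HasCompactSupport u) :
    ∫ x, (∑ i : Fin d, (Atil x - A x).mulVec (fun j => gradient u x j) i * gradient u x i
        + (ctil x - c x) * (u x) ^ 2) ≤
      δ * ∫ x, (∑ i : Fin d, (A x).mulVec (fun j => gradient u x j) i * gradient u x i
        + c x * (u x) ^ 2) := by
  have hδ0 : 0 ≤ δ := by
    rw [hδ]; exact le_trans (div_nonneg hεA hm.le) (le_max_left _ _)
  have hεAδ : εA ≤ δ * m := by
    have : εA / m ≤ δ := hδ ▸ le_max_left _ _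
    calc εA = (εA / m) * m := by field_simp
    _ ≤ δ * m := by nlinarith
  have hεcδ : εc ≤ δ * ζ := by
    have : εc / ζ ≤ δ := hδ ▸ le_max_right _ _
    calc εc = (εc / ζ) * ζ := by field_simp
    _ ≤ δ * ζ := by nlinarith
  -- continuity of gradient
  have hgrad : Continuous (gradient u) := by
    have hf : Continuous (fderiv ℝ u) := hu.continuous_fderiv (by simp)
    have : gradient u = fun x => (InnerProductSpace.toDual ℝ _).symm (fderiv ℝ u x) := rfl
    rw [this]
    exact (InnerProductSpace.toDual ℝ _).symm.continuous.comp hf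
  have hgradj : ∀ j : Fin d, Continuous fun x => gradient u x j :=
    fun j => (continuous_apply j).comp ((PiLp.continuous_ofLp 2 _).comp hgrad)
  have hgrad0 : ∀ x, x ∉ tsupport u → gradient u x = 0 := by
    intro x hx
    have : fderiv ℝ u x = 0 := by
      have := support_fderiv_subset ℝ (f := u)
      by_contra h
      exact hx (this h)
    simp [gradient, this]
  have hu0 : ∀ x, x ∉ tsupport u → u x = 0 := fun x hx => image_eq_zero_of_notMem_tsupport hx
  set f : EuclideanSpace ℝ (Fin d) → ℝ := fun x =>
    ∑ i : Fin d, (Atil x - A x).mulVec (fun j => gradient u x j) i * gradient u x i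
      + (ctil x - c x) * (u x) ^ 2 with hf_def
  set g : EuclideanSpace ℝ (Fin d) → ℝ := fun x =>
    ∑ i : Fin d, (A x).mulVec (fun j => gradient u x j) i * gradient u x i
      + c x * (u x) ^ 2 with hg_def
  have hfc : Continuous f := by
    apply Continuous.add
    · apply continuous_finset_sum
      intro i _
      apply Continuous.mul _ (hgradj i)
      simp only [Matrix.mulVec, dotProduct, Matrix.sub_apply]
      apply continuous_finset_sum
      intro j _
      exact ((hAtil i j).sub (hA i j)).mul (hgradj j)
    · exact ((hctil.sub hc).mul ((hu.continuous).pow 2))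
  have hgc : Continuous g := by
    apply Continuous.add
    · apply continuous_finset_sum
      intro i _
      apply Continuous.mul _ (hgradj i)
      simp only [Matrix.mulVec, dotProduct]
      apply continuous_finset_sum
      intro j _
      exact (hA i j).mul (hgradj j)
    · exact (hc.mul ((hu.continuous).pow 2))
  have hzero : ∀ x, x ∉ tsupport u → (gradient u x = 0 ∧ u x = 0) :=
    fun x hx => ⟨hgrad0 x hx, hu0 x hx⟩
  have hfs : HasCompactSupport f := by
    apply HasCompactSupport.intro hu'
    intro x hx
    obtain ⟨h1, h2⟩ := hzero x hx
    simp [hf_def, h1, h2, Matrix.mulVec, dotProduct]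
  have hgs : HasCompactSupport g := by
    apply HasCompactSupport.intro hu'
    intro x hx
    obtain ⟨h1, h2⟩ := hzero x hx
    simp [hg_def, h1, h2, Matrix.mulVec, dotProduct]
  have hfi : Integrable f := hfc.integrable_of_hasCompactSupport hfs
  have hgi : Integrable g := hgc.integrable_of_hasCompactSupport hgs
  have hpt : ∀ x, f x ≤ δ * g x := by
    intro x
    have h1 := hApert x (gradient u x)
    have h2 := hcpert x
    have h3 := hell x (gradient u x)
    have h4 := hcζ x
    have hn : (0:ℝ) ≤ ‖gradient u x‖ ^ 2 := by positivity
    have hu2 : (0:ℝ) ≤ (u x) ^ 2 := sq_nonneg _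
    have hl1 : ∑ i : Fin d, (Atil x - A x).mulVec (fun j => gradient u x j) i * gradient u x i
        ≤ εA * ‖gradient u x‖ ^ 2 := le_trans (le_abs_self _) h1
    have hl2 : ctil x - c x ≤ εc := le_trans (le_abs_self _) h2
    simp only [hf_def, hg_def]
    nlinarith [mul_le_mul_of_nonneg_left h3 hδ0, mul_le_mul_of_nonneg_right hl2 hu2,
      mul_le_mul_of_nonneg_right hεcδ hu2, mul_le_mul_of_nonneg_right hεAδ hn,
      mul_le_mul_of_nonneg_left (mul_le_mul_of_nonneg_right h4 hu2) hδ0]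
  calc ∫ x, f x ≤ ∫ x, δ * g x := integral_mono hfi (hgi.const_mul δ) hpt
  _ = δ * ∫ x, g x := MeasureTheory.integral_const_mul δ g
end
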